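/- Fix an integer N ≥ 3, parameters λ_1, λ_2, … in [0,1], an arbitrary complex 2^N × 2^N matrix ρ_1, and set ρ_k = (id ⊗ Φ_{λ_{k−1}})(ρ_{k−1}) for k ≥ 2 (the map acting on the N-th qubit). Then for every complex 2^{N−1} × 2^{N−1} matrix A and every k ≥ 1: Tr[ρ_k (A ⊗ σ_z)] = (∏_{j=1}^{k−1} (1+√(1−λ_j²))/2) · Tr[ρ_1 (A ⊗ σ_z)] and Tr[ρ_k (A ⊗ σ_x)] = (1/2^{k−1}) · Tr[ρ_1 (A ⊗ σ_x)]. -/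

import Mathlib

/-!
Pass to the Heisenberg picture: by cyclicity of the trace, `Tr[(P ρ P) M] = Tr[ρ (P M P)]`, so
`Tr[(id ⊗ Φ_λ)(ρ) (A ⊗ B)] = Tr[ρ (A ⊗ Φ_λ(B))]`. Conjugation by `σ_z` and `σ_x` fixes or negates
each of `σ_z`, `σ_x`, so `Φ_λ(σ_z) = ((1 + √(1 - λ²)) / 2) σ_z` and `Φ_λ(σ_x) = σ_x / 2`. Each step
of the evolution therefore multiplies both traces by a fixed scalar, and iterating gives the
products.
-/

open Matrix
open scoped Kronecker

noncomputable section

/-- The Pauli matrix σ_x. -/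
def sigx : Matrix (Fin 2) (Fin 2) ℂ := !![0, 1; 1, 0]

/-- The Pauli matrix σ_z. -/
def sigz : Matrix (Fin 2) (Fin 2) ℂ := !![1, 0; 0, -1]

/-- The space of operators on `N` qubits, written as (operators on the first `N−1`
qubits) ⊗ (operators on the `N`-th qubit): complex `2^N × 2^N` matrices indexed by
`(Fin (N-1) → Fin 2) × Fin 2`. -/
abbrev QK (N : ℕ) :=
  Matrix ((Fin (N - 1) → Fin 2) × Fin 2) ((Fin (N - 1) → Fin 2) × Fin 2) ℂ

/-- The map `id ⊗ Φ_λ`: the single-qubit channel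
`Φ_λ(ρ) = ((2+√(1−λ²))/4)ρ + (1/4)σ_z ρ σ_z + ((1−√(1−λ²))/4)σ_x ρ σ_x`
applied to the `N`-th tensor factor and the identity map on the first `N−1` factors. -/
def idPhi (N : ℕ) (lam : ℝ) (ρ : QK N) : QK N :=
  (((2 + Real.sqrt (1 - lam ^ 2)) / 4 : ℝ) : ℂ) • ρ
    + (1/4 : ℂ) • (((1 : Matrix (Fin (N - 1) → Fin 2) (Fin (N - 1) → Fin 2) ℂ) ⊗ₖ sigz) * ρ
        * ((1 : Matrix (Fin (N - 1) → Fin 2) (Fin (N - 1) → Fin 2) ℂ) ⊗ₖ sigz))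
    + (((1 - Real.sqrt (1 - lam ^ 2)) / 4 : ℝ) : ℂ)
        • (((1 : Matrix (Fin (N - 1) → Fin 2) (Fin (N - 1) → Fin 2) ℂ) ⊗ₖ sigx) * ρ
          * ((1 : Matrix (Fin (N - 1) → Fin 2) (Fin (N - 1) → Fin 2) ℂ) ⊗ₖ sigx))

theorem sigz_mul_self : sigz * sigz = 1 := by
  ext i j
  fin_cases i <;> fin_cases j <;> simp [sigz]

theorem sigx_mul_self : sigx * sigx = 1 := by
  ext i j
  fin_cases i <;> fin_cases j <;> simp [sigx]

theorem sigz_mul_sigx_mul_sigz : sigz * sigx * sigz = -sigx := by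
  ext i j
  fin_cases i <;> fin_cases j <;> simp [sigz, sigx]

theorem sigx_mul_sigz_mul_sigx : sigx * sigz * sigx = -sigz := by
  ext i j
  fin_cases i <;> fin_cases j <;> simp [sigz, sigx]

theorem eq_prod_Icc_mul_of_succ_eq_mul {M : Type*} [CommMonoid M] {f c : ℕ → M}
    (hf : ∀ k, 1 ≤ k → f (k + 1) = c k * f k) (n : ℕ) :
    f (n + 1) = (∏ j ∈ Finset.Icc 1 n, c j) * f 1 := by
  induction n with
  | zero => simp
  | succ n ih =>
    rw [hf (n + 1) (Nat.le_add_left 1 n), ih, Finset.prod_Icc_succ_top (Nat.le_add_left 1 n),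
      mul_comm _ (c (n + 1)), mul_assoc]

theorem Matrix.trace_conj_mul {n R : Type*} [Fintype n] [CommSemiring R]
    (P ρ M : Matrix n n R) : (P * ρ * P * M).trace = (ρ * (P * M * P)).trace := by
  rw [trace_mul_cycle, ← mul_assoc, trace_mul_cycle, ← mul_assoc, trace_mul_comm, mul_assoc]

theorem Matrix.one_kronecker_conj_kronecker {l m R : Type*} [Fintype l] [Fintype m]
    [DecidableEq l] [CommSemiring R] (A : Matrix l l R) (P B : Matrix m m R) :
    (1 ⊗ₖ P) * (A ⊗ₖ B) * (1 ⊗ₖ P) = A ⊗ₖ (P * B * P) := by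
  rw [← mul_kronecker_mul, ← mul_kronecker_mul, one_mul, mul_one]

def phi (lam : ℝ) (B : Matrix (Fin 2) (Fin 2) ℂ) : Matrix (Fin 2) (Fin 2) ℂ :=
  (((2 + Real.sqrt (1 - lam ^ 2)) / 4 : ℝ) : ℂ) • B + (1/4 : ℂ) • (sigz * B * sigz)
    + (((1 - Real.sqrt (1 - lam ^ 2)) / 4 : ℝ) : ℂ) • (sigx * B * sigx)

theorem trace_idPhi_mul_kronecker {N : ℕ} (lam : ℝ) (ρ : QK N)
    (A : Matrix (Fin (N - 1) → Fin 2) (Fin (N - 1) → Fin 2) ℂ) (B : Matrix (Fin 2) (Fin 2) ℂ) :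
    (idPhi N lam ρ * (A ⊗ₖ B)).trace = (ρ * (A ⊗ₖ phi lam B)).trace := by
  simp only [idPhi, phi, add_mul, mul_add, smul_mul, Matrix.mul_smul, kronecker_add,
    kronecker_smul, trace_add, trace_smul, trace_conj_mul, one_kronecker_conj_kronecker]

theorem phi_sigz (lam : ℝ) :
    phi lam sigz = (((1 + Real.sqrt (1 - lam ^ 2)) / 2 : ℝ) : ℂ) • sigz := by
  rw [phi, sigz_mul_self, one_mul, sigx_mul_sigz_mul_sigx, smul_neg, ← sub_eq_add_neg,
    ← add_smul, ← sub_smul]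
  congr 1
  push_cast
  ring

theorem phi_sigx (lam : ℝ) : phi lam sigx = (1 / 2 : ℂ) • sigx := by
  rw [phi, sigx_mul_self, one_mul, sigz_mul_sigx_mul_sigz, smul_neg, ← sub_eq_add_neg,
    ← sub_smul, ← add_smul]
  congr 1
  push_cast
  ring

theorem trace_mul_kronecker_smul {l m R : Type*} [Fintype l] [Fintype m] [CommSemiring R]
    (ρ : Matrix (l × m) (l × m) R) (A : Matrix l l R) (c : R) (B : Matrix m m R) :
    (ρ * (A ⊗ₖ (c • B))).trace = c * (ρ * (A ⊗ₖ B)).trace := by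
  rw [kronecker_smul, Matrix.mul_smul, trace_smul, smul_eq_mul]

theorem trace_mul_kronecker_eq_prod_of_phi_eq_smul {N : ℕ} {lam : ℕ → ℝ} {ρ : ℕ → QK N}
    (hrec : ∀ k, 1 ≤ k → ρ (k + 1) = idPhi N (lam k) (ρ k))
    (A : Matrix (Fin (N - 1) → Fin 2) (Fin (N - 1) → Fin 2) ℂ) {B : Matrix (Fin 2) (Fin 2) ℂ}
    {c : ℕ → ℂ} (hB : ∀ k, phi (lam k) B = c k • B) (n : ℕ) :
    (ρ (n + 1) * (A ⊗ₖ B)).trace = (∏ j ∈ Finset.Icc 1 n, c j) * (ρ 1 * (A ⊗ₖ B)).trace :=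
  eq_prod_Icc_mul_of_succ_eq_mul (f := fun k => (ρ k * (A ⊗ₖ B)).trace) (fun k hk => by
    rw [hrec k hk, trace_idPhi_mul_kronecker, hB, trace_mul_kronecker_smul]) n

theorem trace_evolution
    (N : ℕ)
    (lam : ℕ → ℝ)
    (ρ : ℕ → QK N)
    (hrec : ∀ k, 1 ≤ k → ρ (k + 1) = idPhi N (lam k) (ρ k))
    (A : Matrix (Fin (N - 1) → Fin 2) (Fin (N - 1) → Fin 2) ℂ) :
    ∀ k, 1 ≤ k →
      (ρ k * (A ⊗ₖ sigz)).trace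
        = (∏ j ∈ Finset.Icc 1 (k - 1),
            (((1 + Real.sqrt (1 - lam j ^ 2)) / 2 : ℝ) : ℂ)) * (ρ 1 * (A ⊗ₖ sigz)).trace ∧
      (ρ k * (A ⊗ₖ sigx)).trace
        = (1 / (2 : ℂ) ^ (k - 1)) * (ρ 1 * (A ⊗ₖ sigx)).trace := by
  intro k hk
  obtain ⟨n, rfl⟩ := Nat.exists_eq_add_of_le' hk
  rw [Nat.add_sub_cancel]
  refine ⟨trace_mul_kronecker_eq_prod_of_phi_eq_smul hrec A (fun k => phi_sigz (lam k)) n, ?_⟩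
  rw [trace_mul_kronecker_eq_prod_of_phi_eq_smul hrec A (fun k => phi_sigx (lam k)) n,
    Finset.prod_const, Nat.card_Icc, Nat.add_sub_cancel, _root_.one_div_pow]

end
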